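/- Let A₁,…,A_{n+2} : ℝ → ℝⁿ be C¹ maps such that A₁(0),…,A_{n+2}(0) are in general position, let α₁,…,α_{n+2} be nonzero reals with Σᵢ αᵢ = 0 and Σᵢ αᵢAᵢ(0) = 0, and fix 1 ≤ k ≤ n. For a (k+1)-subset S = {i₁<⋯<i_{k+1}} of {1,…,n+2}, let V_S(t) := det(⟨A_{i_a}(t) − A_{i₁}(t), A_{i_b}(t) − A_{i₁}(t)⟩)_{2≤a,b≤k+1} be the Gram determinant (squared k-volume) of the corresponding k-face. Suppose ε > 0 and that either (case G_{n,k}) for every (k+1)-subset S, V_S is nonincreasing on [0,ε] when ∏_{i∈S} αᵢ < 0 and nondecreasing on [0,ε] when ∏_{i∈S} αᵢ > 0, or (case F_{n,k}) for every (k+1)-subset S, V_S is nondecreasing on [0,ε] when ∏_{i∈S} αᵢ < 0 and nonincreasing on [0,ε] when ∏_{i∈S} αᵢ > 0. Then there exists ε' ∈ (0,ε] such that V_S(t) = V_S(0) for every (k+1)-subset S and every t ∈ [0,ε']; that is, G_{n,k} and F_{n,k} are k-unyielding in ℝⁿ for C¹ motions. -/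

import Mathlib

/-- Points `A₁, …, A_m` in `ℝ^d` are in general position if every `d+1` of them are
affinely independent. -/
def InGeneralPosition {d m : ℕ} (A : Fin m → EuclideanSpace ℝ (Fin d)) : Prop :=
  ∀ s : Finset (Fin m), s.card = d + 1 → AffineIndependent ℝ (fun i : ↥s => A i.1)

/-- The Gram determinant of the face with vertex set `s = {i₁ < ⋯ < i_{k+1}}`:
`det(⟨A_{i_a} − A_{i₁}, A_{i_b} − A_{i₁}⟩)_{2 ≤ a,b ≤ k+1}`, which equals `(k!)²` times
the squared `k`-volume of the corresponding simplex. -/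
noncomputable def gramFace {d m : ℕ} (A : Fin m → EuclideanSpace ℝ (Fin d))
    (s : Finset (Fin m)) : ℝ :=
  if h : s.Nonempty then
    Matrix.det (Matrix.of fun (a b : ↥(s.erase (s.min' h))) =>
      (inner ℝ (A a.1 - A (s.min' h)) (A b.1 - A (s.min' h)) : ℝ))
  else 0

/-!
Let `L(t)` be the `(n + 1) × (n + 2)` matrix with columns `(Aᵢ(t), 1)` and let `β(t)` be an affine
dependence of the configuration at time `t` (`L(t) β(t) = 0`), taken from the maximal minors of
`L(t)` so that it is continuous, normalized by `β(0) = α`. Since `det (1 + X AB) = det (1 + X BA)`,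
sums of principal minors of `AB` and `BA` agree; as `V_S = minor_S (LᵀL) - minor_S (L₀ᵀL₀)`, with
`L₀` the coordinate rows, this turns `∑_{|S| = k+1} (∏_{i∈S} βᵢ) V_S` into the sum of the principal
`(k+1)`-minors through the last index of `Y = L diag(β) Lᵀ`. Freeze `β = β(τ)` and differentiate
at `τ`: the last row and column of `Y(τ)` vanish and its corner `∑ βᵢ` is constant, so each of
these minors is stationary, and `∑_S (∏ βᵢ(τ)) V_S'(τ) = 0`. For small `τ` the products
`∏ βᵢ(τ)` have the signs of `∏ αᵢ`, so the cable and strut constraints make all terms of this sum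
of one sign. Hence every `V_S'(τ)` vanishes and the volumes are constant.
-/

open Matrix Finset Filter Topology

section PrincipalMinor

variable {R : Type*} [CommRing R] {ι : Type*} [DecidableEq ι]

def principalMinor (M : Matrix ι ι R) (s : Finset ι) : R :=
  (M.submatrix (↑) (↑) : Matrix s s R).det

lemma principalMinor_mul_diagonal [Fintype ι] (M : Matrix ι ι R) (β : ι → R) (s : Finset ι) :
    principalMinor (M * diagonal β) s = (∏ i ∈ s, β i) * principalMinor M s := by
  have : (M * diagonal β).submatrix ((↑) : s → ι) (↑)
      = M.submatrix (↑) (↑) * diagonal fun i : s => β i := by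
    ext a b
    simp [mul_diagonal]
  rw [principalMinor, principalMinor, this, det_mul, det_diagonal, mul_comm,
    Finset.prod_coe_sort s β]

lemma sum_principalMinor_mul_comm [Fintype ι] {κ : Type*} [Fintype κ] [DecidableEq κ]
    (A : Matrix ι κ R) (B : Matrix κ ι R) (c : ℕ) :
    ∑ s ∈ univ.powersetCard c, principalMinor (A * B) s
      = ∑ t ∈ univ.powersetCard c, principalMinor (B * A) t := by
  simp only [principalMinor, ← coeff_det_one_add_X_smul_eq_sum_minors, Matrix.map_mul]
  rw [← Matrix.smul_mul, det_one_add_mul_comm, Matrix.mul_smul]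

lemma mul_diagonal_mul_transpose_apply {l n : Type*} [Fintype n] [DecidableEq n]
    (L : Matrix l n R) (β : n → R) (a b : l) :
    (L * diagonal β * Lᵀ) a b = ∑ i, β i * L a i * L b i := by
  rw [mul_apply]
  exact sum_congr rfl fun i _ => by rw [mul_diagonal, transpose_apply]; ring

lemma principalMinor_submatrix {κ : Type*} [DecidableEq κ] (M : Matrix ι ι R) (e : κ ↪ ι)
    (t : Finset κ) : principalMinor (M.submatrix e e) t = principalMinor M (t.map e) := by
  let f : t ≃ t.map e := (Equiv.ofInjective _ (e.injective.comp Subtype.val_injective)).trans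
    (Equiv.subtypeEquivRight fun x => by simp [Finset.mem_map])
  rw [principalMinor, principalMinor, ← det_submatrix_equiv_self f]
  rfl

lemma sum_principalMinor_eq_castSucc_add_last {n : ℕ} (M : Matrix (Fin (n + 1)) (Fin (n + 1)) R)
    (c : ℕ) :
    ∑ S ∈ univ.powersetCard c, principalMinor M S
      = ∑ T ∈ univ.powersetCard c, principalMinor (M.submatrix Fin.castSucc Fin.castSucc) T
        + ∑ S ∈ (univ.powersetCard c).filter (Fin.last n ∈ ·), principalMinor M S := by
  have hmap : (univ.powersetCard c).filter (Fin.last n ∉ ·)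
      = (univ.powersetCard c).map (mapEmbedding Fin.castSuccEmb).toEmbedding := by
    ext S
    simp only [← powersetCard_map, mem_filter, mem_powersetCard, subset_iff, Finset.mem_map,
      Fin.coe_castSuccEmb, mem_univ, true_and, Fin.exists_castSucc_eq, implies_true]
    exact ⟨fun ⟨h, hS⟩ => ⟨fun x hx hl => hS (hl ▸ hx), h⟩, fun ⟨hS, h⟩ => ⟨h, fun hl => hS hl rfl⟩⟩
  rw [← sum_filter_not_add_sum_filter _ (Fin.last n ∈ ·), hmap, sum_map]
  congr 1
  refine sum_congr rfl fun T _ => ?_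
  exact (principalMinor_submatrix M Fin.castSuccEmb T).symm

lemma det_add_single_self [Fintype ι] (X : Matrix ι ι R) (m : ι) :
    det (X + single m m 1) = det X + principalMinor X {m}ᶜ := by
  have hX : X + single m m 1 = X.updateRow m (X m + Pi.single m 1) := by
    ext i j
    by_cases hi : i = m
    · subst hi; simp [single_apply, Pi.single_apply, eq_comm]
    · simp [hi, Ne.symm hi]
  have hminor : X.updateRow m (Pi.single m 1)
      = of (({m}ᶜ : Finset ι).piecewise X.row (1 : Matrix ι ι R).row) := by
    ext i j
    by_cases hi : i = m
    · subst hi; simp [Pi.single_apply, one_apply, eq_comm]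
    · simp [hi]
  rw [hX, det_updateRow_add, updateRow_eq_self, hminor, det_piecewise_one_eq_submatrix_det]
  rfl

lemma det_of_sub_pivot [Fintype ι] (M : Matrix ι ι R) (c : ι → R) (m : ι) (hc : c m = 0) :
    det (of fun a b => M a b - c a * M m b - c b * (M a m - c a * M m m)) = det M := by
  set B := of fun a b => M a b - c a * M m b
  have hB : det B = det M :=
    det_eq_of_forall_row_eq_smul_add_const (-c) m (by simp [hc]) fun a b => by simp [B]; ring
  rw [← hB, ← det_transpose, ← det_transpose B]
  exact det_eq_of_forall_row_eq_smul_add_const (-c) m (by simp [hc]) fun a b => by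
    simp [B]; ring

lemma det_of_add_one [Fintype ι] (C : Matrix ι ι R) (m : ι) :
    det (of fun a b => C a b + 1)
      = det C + principalMinor (of fun a b => C a b - C m b - C a m + C m m) {m}ᶜ := by
  set c : ι → R := fun a => if a = m then 0 else 1
  set D := of fun a b => C a b - c a * C m b - c b * (C a m - c a * C m m)
  have hD : (of fun a b => C a b + 1 - c a * (C m b + 1) - c b * (C a m + 1 - c a * (C m m + 1)))
      = D + single m m 1 := by
    ext a b
    by_cases ha : a = m <;> by_cases hb : b = m <;>
      simp [D, c, ha, hb, @eq_comm _ m]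
  have hDm : principalMinor D {m}ᶜ
      = principalMinor (of fun a b => C a b - C m b - C a m + C m m) {m}ᶜ := by
    unfold principalMinor
    congr 1
    ext ⟨a, ha⟩ ⟨b, hb⟩
    simp only [mem_compl, mem_singleton] at ha hb
    simp [D, c, ha, hb]
    ring
  rw [← det_of_sub_pivot _ c m (if_pos rfl)]
  simp only [of_apply]
  rw [hD, det_add_single_self, det_of_sub_pivot C c m (if_pos rfl), hDm]

lemma principalMinor_of_add_one (C : Matrix ι ι R) {s : Finset ι} {m : ι} (hm : m ∈ s) :
    principalMinor (of fun a b => C a b + 1) s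
      = principalMinor C s
        + principalMinor (of fun a b => C a b - C m b - C a m + C m m) (s.erase m) := by
  have herase : ({⟨m, hm⟩}ᶜ : Finset s).map (Function.Embedding.subtype _) = s.erase m := by
    ext a
    simp [and_comm]
  rw [← herase, ← principalMinor_submatrix]
  exact det_of_add_one (C.submatrix ((↑) : s → ι) (↑)) ⟨m, hm⟩

end PrincipalMinor

section LiftMatrix

variable {d m : ℕ}

def liftMatrix (p : Fin m → EuclideanSpace ℝ (Fin d)) : Matrix (Fin (d + 1)) (Fin m) ℝ :=
  of (Fin.snoc (fun r i => p i r) 1)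

@[simp]
lemma liftMatrix_castSucc (p : Fin m → EuclideanSpace ℝ (Fin d)) (r : Fin d) (i : Fin m) :
    liftMatrix p r.castSucc i = p i r := by
  simp [liftMatrix]

@[simp]
lemma liftMatrix_last (p : Fin m → EuclideanSpace ℝ (Fin d)) (i : Fin m) :
    liftMatrix p (Fin.last d) i = 1 := by
  simp [liftMatrix]

lemma submatrix_liftMatrix_castSucc (p : Fin m → EuclideanSpace ℝ (Fin d)) :
    ((liftMatrix p).submatrix Fin.castSucc id)ᵀ * (liftMatrix p).submatrix Fin.castSucc id
      = gram ℝ p := by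
  ext i j
  simp [mul_apply, gram_apply, PiLp.inner_apply, mul_comm]

lemma transpose_liftMatrix_mul_self (p : Fin m → EuclideanSpace ℝ (Fin d)) :
    (liftMatrix p)ᵀ * liftMatrix p = of fun i j => gram ℝ p i j + 1 := by
  ext i j
  simp [mul_apply, Fin.sum_univ_castSucc, gram_apply, PiLp.inner_apply, mul_comm]

lemma continuous_liftMatrix :
    Continuous (liftMatrix : (Fin m → EuclideanSpace ℝ (Fin d)) → Matrix _ _ ℝ) := by
  refine continuous_matrix fun r i => ?_
  induction r using Fin.lastCases with
  | last => simp [continuous_const]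
  | cast r =>
    simp only [liftMatrix_castSucc]
    exact (EuclideanSpace.proj r).continuous.comp (continuous_apply i)

lemma liftMatrix_mulVec_eq_zero_iff (p : Fin m → EuclideanSpace ℝ (Fin d)) (γ : Fin m → ℝ) :
    liftMatrix p *ᵥ γ = 0 ↔ ∑ i, γ i = 0 ∧ ∑ i, γ i • p i = 0 := by
  simp [funext_iff, Fin.forall_fin_succ', mulVec, dotProduct, PiLp.ext_iff, mul_comm, and_comm]

end LiftMatrix

section FaceVolumes

variable {d m : ℕ}

lemma gramFace_eq_sub (p : Fin m → EuclideanSpace ℝ (Fin d)) {s : Finset (Fin m)}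
    (hs : s.Nonempty) :
    gramFace p s = principalMinor ((liftMatrix p)ᵀ * liftMatrix p) s
      - principalMinor (((liftMatrix p).submatrix Fin.castSucc id)ᵀ
          * (liftMatrix p).submatrix Fin.castSucc id) s := by
  rw [transpose_liftMatrix_mul_self, submatrix_liftMatrix_castSucc,
    principalMinor_of_add_one _ (s.min'_mem hs), add_sub_cancel_left, gramFace, dif_pos hs]
  unfold principalMinor
  congr 1
  ext a b
  simp [gram_apply, inner_sub_left, inner_sub_right, real_inner_comm]
  ring

lemma sum_prod_mul_gramFace (k : ℕ) (p : Fin m → EuclideanSpace ℝ (Fin d)) (β : Fin m → ℝ) :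
    ∑ s ∈ univ.powersetCard (k + 1), (∏ i ∈ s, β i) * gramFace p s
      = ∑ S ∈ (univ.powersetCard (k + 1)).filter (Fin.last d ∈ ·),
          principalMinor (liftMatrix p * diagonal β * (liftMatrix p)ᵀ) S := by
  set L := liftMatrix p
  set L₀ := L.submatrix Fin.castSucc id
  have hface : ∀ s ∈ univ.powersetCard (k + 1), (∏ i ∈ s, β i) * gramFace p s
      = principalMinor (Lᵀ * (L * diagonal β)) s
        - principalMinor (L₀ᵀ * (L₀ * diagonal β)) s := by
    intro s hs
    have hne : s.Nonempty := card_pos.mp (by rw [(mem_powersetCard.mp hs).2]; omega)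
    rw [← Matrix.mul_assoc, ← Matrix.mul_assoc, principalMinor_mul_diagonal,
      principalMinor_mul_diagonal, gramFace_eq_sub p hne, mul_sub]
  have hL₀ : L₀ * diagonal β * L₀ᵀ = (L * diagonal β * Lᵀ).submatrix Fin.castSucc Fin.castSucc := by
    ext a b
    simp [L₀, mul_apply]
  rw [sum_congr rfl hface, sum_sub_distrib, sum_principalMinor_mul_comm Lᵀ,
    sum_principalMinor_mul_comm L₀ᵀ, hL₀, sum_principalMinor_eq_castSucc_add_last,
    add_sub_cancel_left]

end FaceVolumes

section AffineDependence

def cofactorVector {R : Type*} [CommRing R] {n : ℕ} (L : Matrix (Fin (n + 1)) (Fin (n + 2)) R) :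
    Fin (n + 2) → R :=
  fun i => (-1) ^ (i : ℕ) * det (L.submatrix id i.succAbove)

/-- Entry `r` is the Laplace expansion along the first row of `L` with its row `r` put on top,
a matrix with a repeated row. -/
lemma mulVec_cofactorVector {R : Type*} [CommRing R] {n : ℕ}
    (L : Matrix (Fin (n + 1)) (Fin (n + 2)) R) : L *ᵥ cofactorVector L = 0 := by
  ext r
  set f : Fin (n + 2) → Fin (n + 1) := Fin.cons r id
  have h := det_succ_row_zero (L.submatrix f id)
  rw [det_zero_of_row_eq (Fin.succ_ne_zero r).symm (by ext; simp [f])] at h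
  rw [Pi.zero_apply, h, mulVec, dotProduct]
  refine sum_congr rfl fun j _ => ?_
  have hf : f ∘ Fin.succ = id := rfl
  simp only [cofactorVector, submatrix_apply, submatrix_submatrix, hf, Function.id_comp]
  simp [f]
  ring

variable {d : ℕ} {p : Fin (d + 2) → EuclideanSpace ℝ (Fin d)}

lemma InGeneralPosition.eq_zero_of_mulVec_eq_zero (hgp : InGeneralPosition p) {γ : Fin (d + 2) → ℝ}
    (hγ : liftMatrix p *ᵥ γ = 0) {j : Fin (d + 2)} (hj : γ j = 0) : γ = 0 := by
  obtain ⟨hsum, hsmul⟩ := (liftMatrix_mulVec_eq_zero_iff p γ).mp hγ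
  have hind := hgp (univ.erase j) (by simp [card_erase_of_mem])
  have := hind.eq_zero_of_sum_eq_zero (s := (univ : Finset (univ.erase j))) (w := fun i => γ i)
    (by rw [sum_coe_sort _ γ, sum_erase _ hj, hsum])
    (by rw [sum_coe_sort _ (fun i => γ i • p i), sum_erase _ (by simp [hj]), hsmul])
  ext i
  by_cases hi : i = j
  · exact hi ▸ hj
  · exact this ⟨i, by simp [hi]⟩ (mem_univ _)

lemma InGeneralPosition.det_submatrix_succAbove_ne_zero (hgp : InGeneralPosition p)
    (j : Fin (d + 2)) : det ((liftMatrix p).submatrix id j.succAbove) ≠ 0 := by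
  intro h
  obtain ⟨g, hg, hLg⟩ := exists_mulVec_eq_zero_iff.mpr h
  have hγ : liftMatrix p *ᵥ Fin.insertNth j 0 g = 0 := by
    ext r
    simpa [mulVec, dotProduct, Fin.sum_univ_succAbove _ j] using congrFun hLg r
  have := hgp.eq_zero_of_mulVec_eq_zero hγ (Fin.insertNth_apply_same _ _ _)
  exact hg (funext fun i => by simpa using congrFun this (j.succAbove i))

lemma InGeneralPosition.cofactorVector_ne_zero (hgp : InGeneralPosition p) (j : Fin (d + 2)) :
    cofactorVector (liftMatrix p) j ≠ 0 :=
  mul_ne_zero (pow_ne_zero _ (neg_ne_zero.mpr one_ne_zero)) (hgp.det_submatrix_succAbove_ne_zero j)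

lemma InGeneralPosition.eq_smul_of_mulVec_eq_zero (hgp : InGeneralPosition p)
    {γ δ : Fin (d + 2) → ℝ} (hγ : liftMatrix p *ᵥ γ = 0) (hδ : liftMatrix p *ᵥ δ = 0)
    {j : Fin (d + 2)} (hj : δ j ≠ 0) : γ = (γ j / δ j) • δ := by
  refine sub_eq_zero.mp (hgp.eq_zero_of_mulVec_eq_zero (j := j) ?_ ?_)
  · rw [mulVec_sub, mulVec_smul, hγ, hδ, smul_zero, sub_zero]
  · simp [div_mul_cancel₀ _ hj]

lemma exists_continuous_affineDependence {P : ℝ → Fin (d + 2) → EuclideanSpace ℝ (Fin d)}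
    (hP : Continuous P) (hgp : InGeneralPosition (P 0)) {α : Fin (d + 2) → ℝ}
    (hα : liftMatrix (P 0) *ᵥ α = 0) :
    ∃ β : ℝ → Fin (d + 2) → ℝ, Continuous β ∧ β 0 = α ∧ ∀ t, liftMatrix (P t) *ᵥ β t = 0 := by
  set γ := fun t => cofactorVector (liftMatrix (P t))
  have hγ : Continuous γ := by
    refine continuous_pi fun i => continuous_const.mul (Continuous.matrix_det ?_)
    exact ((continuous_liftMatrix.comp hP).matrix_submatrix _ _)
  refine ⟨fun t => (α 0 / γ 0 0) • γ t, by fun_prop, ?_, fun t => ?_⟩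
  · exact (hgp.eq_smul_of_mulVec_eq_zero hα (mulVec_cofactorVector _)
      (hgp.cofactorVector_ne_zero 0)).symm
  · rw [mulVec_smul, mulVec_cofactorVector, smul_zero]

end AffineDependence

section DerivDet

variable {ι : Type*} [Fintype ι] [DecidableEq ι]

lemma hasDerivAt_det {M : ℝ → Matrix ι ι ℝ} {M' : Matrix ι ι ℝ} {τ : ℝ}
    (h : ∀ i j, HasDerivAt (fun t => M t i j) (M' i j) τ) :
    HasDerivAt (fun t => (M t).det)
      (∑ σ : Equiv.Perm ι, (σ.sign : ℝ) * ∑ i, (∏ j ∈ univ.erase i, M τ (σ j) j) * M' (σ i) i)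
      τ := by
  simp only [det_apply']
  refine HasDerivAt.fun_sum fun σ _ => HasDerivAt.const_mul _ ?_
  simpa using HasDerivAt.fun_finsetProd (u := univ) fun i _ => h (σ i) i

/-- In the Leibniz expansion, a term with `σ r ≠ r` has two factors vanishing at `τ` (in row `r`
and in column `r`), and a term with `σ r = r` has the factor `M · r r`, which vanishes at `τ`
together with its derivative. -/
lemma hasDerivAt_det_eq_zero {M : ℝ → Matrix ι ι ℝ} {τ : ℝ}
    (hM : ∀ i j, DifferentiableAt ℝ (fun t => M t i j) τ) (r : ι)
    (hrow : ∀ j, M τ r j = 0) (hcol : ∀ i, M τ i r = 0)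
    (hcorner : deriv (fun t => M t r r) τ = 0) :
    HasDerivAt (fun t => (M t).det) 0 τ := by
  convert hasDerivAt_det fun i j => (hM i j).hasDerivAt
  refine (sum_eq_zero fun σ _ => ?_).symm
  rw [sum_eq_zero, mul_zero]
  intro i _
  by_cases hir : i = r
  · subst hir
    by_cases hfix : σ i = i
    · simp [hfix, hcorner]
    · have hj : σ⁻¹ i ∈ univ.erase i :=
        mem_erase.mpr ⟨fun h => hfix (by simpa using (congrArg σ h).symm), mem_univ _⟩
      rw [prod_eq_zero (f := fun j => M τ (σ j) j) hj (by simp [hrow]), zero_mul]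
  · rw [prod_eq_zero (f := fun j => M τ (σ j) j) (mem_erase.mpr ⟨Ne.symm hir, mem_univ r⟩)
      (hcol _), zero_mul]

end DerivDet

section Motion

variable {d m : ℕ} {P : ℝ → Fin m → EuclideanSpace ℝ (Fin d)} {τ : ℝ}

lemma differentiableAt_liftMatrix_apply {i : Fin m}
    (hP : DifferentiableAt ℝ (fun t => P t i) τ) (r : Fin (d + 1)) :
    DifferentiableAt ℝ (fun t => liftMatrix (P t) r i) τ := by
  induction r using Fin.lastCases with
  | last => simp
  | cast r =>
    simp only [liftMatrix_castSucc]
    exact (EuclideanSpace.proj r).differentiableAt.comp τ hP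

lemma hasDerivAt_sum_prod_mul_gramFace (k : ℕ) (hP : ∀ i, DifferentiableAt ℝ (fun t => P t i) τ)
    {β : Fin m → ℝ} (hβ : liftMatrix (P τ) *ᵥ β = 0) :
    HasDerivAt (fun t => ∑ s ∈ univ.powersetCard (k + 1), (∏ i ∈ s, β i) * gramFace (P t) s)
      0 τ := by
  simp only [sum_prod_mul_gramFace]
  have hentry : ∀ a b, DifferentiableAt ℝ
      (fun t => (liftMatrix (P t) * diagonal β * (liftMatrix (P t))ᵀ) a b) τ := by
    intro a b
    simp only [mul_diagonal_mul_transpose_apply]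
    exact DifferentiableAt.fun_sum fun i _ =>
      ((differentiableAt_const _).mul (differentiableAt_liftMatrix_apply (hP i) a)).mul
        (differentiableAt_liftMatrix_apply (hP i) b)
  have hlast : ∀ t j, (liftMatrix (P t) * diagonal β * (liftMatrix (P t))ᵀ) (Fin.last d) j
      = (liftMatrix (P t) *ᵥ β) j ∧
      (liftMatrix (P t) * diagonal β * (liftMatrix (P t))ᵀ) j (Fin.last d)
      = (liftMatrix (P t) *ᵥ β) j := by
    intro t j
    simp [mul_diagonal_mul_transpose_apply, mulVec, dotProduct, mul_comm]
  rw [← sum_const_zero (s := (univ.powersetCard (k + 1)).filter (Fin.last d ∈ ·))]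
  refine HasDerivAt.fun_sum fun S hS => ?_
  refine hasDerivAt_det_eq_zero (fun a b => hentry a b) ⟨Fin.last d, (mem_filter.mp hS).2⟩
    (fun b => ?_) (fun a => ?_) ?_
  · simp [(hlast τ b).1, hβ]
  · simp [(hlast τ a).2, hβ]
  · simp [(hlast _ _).1, mulVec, dotProduct]

lemma differentiableAt_gramFace (hP : ∀ i, DifferentiableAt ℝ (fun t => P t i) τ)
    (s : Finset (Fin m)) : DifferentiableAt ℝ (fun t => gramFace (P t) s) τ := by
  unfold gramFace
  by_cases hs : s.Nonempty
  · simp only [hs, dite_true]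
    refine (hasDerivAt_det fun a b => (DifferentiableAt.hasDerivAt ?_)).differentiableAt
    exact ((hP a).sub (hP _)).inner ℝ ((hP b).sub (hP _))
  · simp [hs]

lemma sum_prod_mul_deriv_gramFace_eq_zero (k : ℕ) (hP : ∀ i, DifferentiableAt ℝ (fun t => P t i) τ)
    {β : Fin m → ℝ} (hβ : liftMatrix (P τ) *ᵥ β = 0) :
    ∑ s ∈ univ.powersetCard (k + 1), (∏ i ∈ s, β i) * deriv (fun t => gramFace (P t) s) τ
      = 0 :=
  (HasDerivAt.fun_sum fun s _ => ((differentiableAt_gramFace hP s).hasDerivAt.const_mul _)).unique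
    (hasDerivAt_sum_prod_mul_gramFace k hP hβ)

lemma deriv_gramFace_eq_zero (k : ℕ) (hP : ∀ i, DifferentiableAt ℝ (fun t => P t i) τ)
    {β : Fin m → ℝ} (hβ : liftMatrix (P τ) *ᵥ β = 0) (hβ₀ : ∀ i, β i ≠ 0)
    (hsign : (∀ s ∈ univ.powersetCard (k + 1),
        0 ≤ (∏ i ∈ s, β i) * deriv (fun t => gramFace (P t) s) τ) ∨
      (∀ s ∈ univ.powersetCard (k + 1),
        (∏ i ∈ s, β i) * deriv (fun t => gramFace (P t) s) τ ≤ 0)) :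
    ∀ s ∈ univ.powersetCard (k + 1), deriv (fun t => gramFace (P t) s) τ = 0 := by
  intro s hs
  have hzero := sum_prod_mul_deriv_gramFace_eq_zero k hP hβ
  have hterm := hsign.elim (fun h => (sum_eq_zero_iff_of_nonneg h).mp hzero s hs)
    (fun h => (sum_eq_zero_iff_of_nonpos h).mp hzero s hs)
  exact (mul_eq_zero.mp hterm).resolve_left (prod_ne_zero_iff.mpr fun i _ => hβ₀ i)

end Motion

section SignedMonotone

variable {f : ℝ → ℝ} {f' q r a b τ : ℝ}

lemma HasDerivAt.mul_nonneg_of_signed_monotoneOn (hf : HasDerivAt f f' τ) (hτ : τ ∈ Set.Ico a b)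
    (hqr : 0 < q * r)
    (h : (q < 0 → AntitoneOn f (Set.Icc a b)) ∧ (0 < q → MonotoneOn f (Set.Icc a b))) :
    0 ≤ r * f' := by
  have hacc : AccPt τ (𝓟 (Set.Icc a b)) := by
    refine accPt_principal_iff_nhdsWithin.mpr ((left_nhdsWithin_Ioo_neBot hτ.2).mono
      (nhdsWithin_mono _ fun x hx => ⟨⟨hτ.1.trans hx.1.le, hx.2.le⟩, hx.1.ne'⟩))
  rcases pos_and_pos_or_neg_and_neg_of_mul_pos hqr with ⟨hq, hr⟩ | ⟨hq, hr⟩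
  · exact mul_nonneg hr.le (hf.hasDerivWithinAt.nonneg_of_monotoneOn hacc (h.2 hq))
  · exact mul_nonneg_of_nonpos_of_nonpos hr.le
      (hf.hasDerivWithinAt.nonpos_of_antitoneOn hacc (h.1 hq))

lemma HasDerivAt.mul_nonpos_of_signed_antitoneOn (hf : HasDerivAt f f' τ) (hτ : τ ∈ Set.Ico a b)
    (hqr : 0 < q * r)
    (h : (q < 0 → MonotoneOn f (Set.Icc a b)) ∧ (0 < q → AntitoneOn f (Set.Icc a b))) :
    r * f' ≤ 0 := by
  have := hf.neg.mul_nonneg_of_signed_monotoneOn hτ hqr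
    ⟨fun hq => (h.1 hq).neg, fun hq => (h.2 hq).neg⟩
  linarith

end SignedMonotone

lemma Continuous.exists_forall_Icc_mul_pos {ι : Type*} [Finite ι] {β : ℝ → ι → ℝ}
    (hβ : Continuous β) {α : ι → ℝ} (hα : ∀ i, α i ≠ 0) (hβ₀ : β 0 = α) {ε : ℝ} (hε : 0 < ε) :
    ∃ ε₁, 0 < ε₁ ∧ ε₁ ≤ ε ∧ ∀ t ∈ Set.Icc 0 ε₁, ∀ i, 0 < α i * β t i := by
  have hev : ∀ᶠ t in 𝓝 0, ∀ i, 0 < α i * β t i := eventually_all.mpr fun i =>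
    ((continuous_const.mul ((continuous_apply i).comp hβ)).tendsto 0).eventually_const_lt
      (by simpa [hβ₀] using mul_self_pos.mpr (hα i))
  obtain ⟨u, hu, hsub⟩ := mem_nhdsGE_iff_exists_Icc_subset.mp (hev.filter_mono nhdsWithin_le_nhds)
  exact ⟨min ε u, lt_min hε hu, min_le_left _ _,
    fun t ht => hsub ⟨ht.1, ht.2.trans (min_le_right _ _)⟩⟩

theorem k_unyielding_in_Rn_general {n : ℕ}
    (A : Fin (n + 2) → ℝ → EuclideanSpace ℝ (Fin n))
    (hA : ∀ i, ContDiff ℝ 1 (A i))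
    (hgp : InGeneralPosition (fun i => A i 0))
    (α : Fin (n + 2) → ℝ) (hα : ∀ i, α i ≠ 0)
    (hsum : ∑ i, α i = 0) (hsum2 : ∑ i, α i • A i 0 = 0)
    (k : ℕ)
    (ε : ℝ) (hε : 0 < ε)
    (hcon :
      (∀ s ∈ Finset.powersetCard (k + 1) (Finset.univ : Finset (Fin (n + 2))),
        ((∏ i ∈ s, α i) < 0 →
          AntitoneOn (fun t : ℝ => gramFace (fun i => A i t) s) (Set.Icc 0 ε)) ∧
        (0 < (∏ i ∈ s, α i) →
          MonotoneOn (fun t : ℝ => gramFace (fun i => A i t) s) (Set.Icc 0 ε)))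
      ∨
      (∀ s ∈ Finset.powersetCard (k + 1) (Finset.univ : Finset (Fin (n + 2))),
        ((∏ i ∈ s, α i) < 0 →
          MonotoneOn (fun t : ℝ => gramFace (fun i => A i t) s) (Set.Icc 0 ε)) ∧
        (0 < (∏ i ∈ s, α i) →
          AntitoneOn (fun t : ℝ => gramFace (fun i => A i t) s) (Set.Icc 0 ε)))) :
    ∃ ε' : ℝ, 0 < ε' ∧ ε' ≤ ε ∧
      ∀ s ∈ Finset.powersetCard (k + 1) (Finset.univ : Finset (Fin (n + 2))),
        ∀ t ∈ Set.Icc (0 : ℝ) ε',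
          gramFace (fun i => A i t) s = gramFace (fun i => A i 0) s := by
  have hP : ∀ i τ, DifferentiableAt ℝ (A i) τ :=
    fun i => (hA i).differentiable one_ne_zero
  have hV : ∀ s τ, HasDerivAt (fun t => gramFace (fun i => A i t) s)
      (deriv (fun t => gramFace (fun i => A i t) s) τ) τ :=
    fun s τ => (differentiableAt_gramFace (fun i => hP i τ) s).hasDerivAt
  obtain ⟨β, hβ, hβ₀, hdep⟩ := exists_continuous_affineDependence
    (continuous_pi fun i => (hA i).continuous) hgp
    ((liftMatrix_mulVec_eq_zero_iff _ α).mpr ⟨hsum, hsum2⟩)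
  obtain ⟨ε₁, hε₁, hε₁ε, hsign⟩ := hβ.exists_forall_Icc_mul_pos hα hβ₀ hε
  have hstat : ∀ τ ∈ Set.Ico 0 ε₁, ∀ s ∈ univ.powersetCard (k + 1),
      deriv (fun t => gramFace (fun i => A i t) s) τ = 0 := by
    intro τ hτ
    have hτε : τ ∈ Set.Ico 0 ε := ⟨hτ.1, hτ.2.trans_le hε₁ε⟩
    have hτ₁ := hsign τ (Set.Ico_subset_Icc_self hτ)
    have hweight : ∀ s : Finset (Fin (n + 2)), 0 < (∏ i ∈ s, α i) * ∏ i ∈ s, β τ i :=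
      fun s => prod_mul_distrib (f := α) ▸ prod_pos fun i _ => hτ₁ i
    refine deriv_gramFace_eq_zero k (fun i => hP i τ) (hdep τ)
      (fun i => right_ne_zero_of_mul (hτ₁ i).ne') ?_
    exact hcon.imp
      (fun hG s hs => (hV s τ).mul_nonneg_of_signed_monotoneOn hτε (hweight s) (hG s hs))
      (fun hF s hs => (hV s τ).mul_nonpos_of_signed_antitoneOn hτε (hweight s) (hF s hs))
  refine ⟨ε₁, hε₁, hε₁ε, fun s hs t ht => ?_⟩
  refine constant_of_has_deriv_right_zero (fun x _ => (hV s x).continuousAt.continuousWithinAt)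
    (fun x hx => ?_) t ht
  exact hstat x hx s hs ▸ (hV s x).hasDerivWithinAt

/-- The frameworks `G_{n,k}` and `F_{n,k}` are `k`-unyielding in `ℝⁿ` for `C¹` motions:
if each `k`-face's squared volume is monotone in the direction dictated by the sign of the
product of its coefficients (case `G_{n,k}`), or in the opposite direction (case `F_{n,k}`),
then all the squared volumes of the `k`-faces are preserved for sufficiently small time. -/
theorem k_unyielding_in_Rn {n : ℕ}
    (A : Fin (n + 2) → ℝ → EuclideanSpace ℝ (Fin n))
    (hA : ∀ i, ContDiff ℝ 1 (A i))
    (hgp : InGeneralPosition (fun i => A i 0))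
    (α : Fin (n + 2) → ℝ) (hα : ∀ i, α i ≠ 0)
    (hsum : ∑ i, α i = 0) (hsum2 : ∑ i, α i • A i 0 = 0)
    (k : ℕ) (hk1 : 1 ≤ k) (hkn : k ≤ n)
    (ε : ℝ) (hε : 0 < ε)
    (hcon :
      (∀ s ∈ Finset.powersetCard (k + 1) (Finset.univ : Finset (Fin (n + 2))),
        ((∏ i ∈ s, α i) < 0 →
          AntitoneOn (fun t : ℝ => gramFace (fun i => A i t) s) (Set.Icc 0 ε)) ∧
        (0 < (∏ i ∈ s, α i) →
          MonotoneOn (fun t : ℝ => gramFace (fun i => A i t) s) (Set.Icc 0 ε)))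
      ∨
      (∀ s ∈ Finset.powersetCard (k + 1) (Finset.univ : Finset (Fin (n + 2))),
        ((∏ i ∈ s, α i) < 0 →
          MonotoneOn (fun t : ℝ => gramFace (fun i => A i t) s) (Set.Icc 0 ε)) ∧
        (0 < (∏ i ∈ s, α i) →
          AntitoneOn (fun t : ℝ => gramFace (fun i => A i t) s) (Set.Icc 0 ε)))) :
    ∃ ε' : ℝ, 0 < ε' ∧ ε' ≤ ε ∧
      ∀ s ∈ Finset.powersetCard (k + 1) (Finset.univ : Finset (Fin (n + 2))),
        ∀ t ∈ Set.Icc (0 : ℝ) ε',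
          gramFace (fun i => A i t) s = gramFace (fun i => A i 0) s :=
  k_unyielding_in_Rn_general A hA hgp α hα hsum hsum2 k ε hε hcon
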